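/- arXiv:1908.10986 — 2 statements merged into one kernel-verified Lean document; each statement's English description precedes it below -/
import Mathlib

section
/- In the lattice ℤ^8 with basis e₀,…,e₇, intersection form diag(1,−1,…,−1) and K = −3e₀ + e₁ + ⋯ + e₇: every vector D with D·K = 0 and D² = −2 can be written as D = L₁ − L₂ where L₁, L₂ satisfy Lᵢ² = Lᵢ·K = −1 and L₁·L₂ = 0. -/
/-- The intersection form of the blowup of P² at 7 points: diag(1,-1,…,-1). -/
def ip8 (x y : Fin 8 → ℤ) : ℤ :=
  x 0 * y 0 - ∑ i : Fin 7, x i.succ * y i.succ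

/-- The canonical class K = -3e₀ + e₁ + ⋯ + e₇. -/
def Kdp : Fin 8 → ℤ := fun i => if i = 0 then -3 else 1

/-!
The reflection `s_D x = x + (x·D) D` in a root `D` is an isometry fixing `K`, so it maps lines
to lines and negates `D·L`. Hence, after possibly replacing `D` by `-D`, it suffices to find a
line `L` with `D·L = 1` when `d = D₀ ≥ 0`; then `L + D = s_D L` and `L` are disjoint lines.
Writing `mᵢ = Dᵢ₊₁`, we have `∑ mᵢ = -3d` and `∑ mᵢ² = d² + 2`, so Cauchy–Schwarz forces
`d ≤ 2`. For `d = 0` some `mⱼ = -1` and the exceptional curve `Eⱼ` works; for `d ∈ {1, 2}`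
every `mᵢ ∈ {0, -1}` and a count of the zeros produces a line `E₀ - Eⱼ - Eₖ`.
-/

open Finset

lemma ip8_comm (x y : Fin 8 → ℤ) : ip8 x y = ip8 y x := by
  simp only [ip8, mul_comm]

lemma ip8_add_left (x y z : Fin 8 → ℤ) : ip8 (x + y) z = ip8 x z + ip8 y z := by
  simp only [ip8, Pi.add_apply, add_mul, sum_add_distrib]; ring

lemma ip8_smul_left (a : ℤ) (x y : Fin 8 → ℤ) : ip8 (a • x) y = a * ip8 x y := by
  simp only [ip8, Pi.smul_apply, smul_eq_mul, mul_assoc, ← mul_sum]; ring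

lemma ip8_add_right (x y z : Fin 8 → ℤ) : ip8 x (y + z) = ip8 x y + ip8 x z := by
  rw [ip8_comm, ip8_add_left, ip8_comm y, ip8_comm z]

lemma ip8_smul_right (a : ℤ) (x y : Fin 8 → ℤ) : ip8 x (a • y) = a * ip8 x y := by
  rw [ip8_comm, ip8_smul_left, ip8_comm]

lemma ip8_sub_left (x y z : Fin 8 → ℤ) : ip8 (x - y) z = ip8 x z - ip8 y z := by
  simp only [ip8, Pi.sub_apply, sub_mul, sum_sub_distrib]; ring

lemma ip8_neg_left (x y : Fin 8 → ℤ) : ip8 (-x) y = -ip8 x y := by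
  simpa using ip8_smul_left (-1) x y

lemma ip8_self (x : Fin 8 → ℤ) : ip8 x x = x 0 ^ 2 - ∑ i : Fin 7, x i.succ ^ 2 := by
  simp only [ip8, sq]

lemma ip8_Kdp (x : Fin 8 → ℤ) : ip8 x Kdp = -3 * x 0 - ∑ i : Fin 7, x i.succ := by
  simp [ip8, Kdp, Fin.succ_ne_zero, mul_comm]

def IsLine (L : Fin 8 → ℤ) : Prop := ip8 L L = -1 ∧ ip8 L Kdp = -1

/-- The exceptional curve over the `j`-th blown-up point. -/
def exceptional (j : Fin 7) : Fin 8 → ℤ := Pi.single j.succ 1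

/-- The strict transform of the line through the `j`-th and `k`-th points. -/
def lineThrough (j k : Fin 7) : Fin 8 → ℤ := Pi.single 0 1 - exceptional j - exceptional k

lemma ip8_exceptional (x : Fin 8 → ℤ) (j : Fin 7) : ip8 x (exceptional j) = -x j.succ := by
  simp [ip8, exceptional, Pi.single_apply, Fin.succ_ne_zero]

lemma ip8_lineThrough (x : Fin 8 → ℤ) (j k : Fin 7) :
    ip8 x (lineThrough j k) = x 0 + x j.succ + x k.succ := by
  rw [ip8_comm, lineThrough, ip8_sub_left, ip8_sub_left, ip8_comm (exceptional j),
    ip8_comm (exceptional k), ip8_exceptional, ip8_exceptional]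
  simp [ip8, Fin.succ_ne_zero]

lemma isLine_exceptional (j : Fin 7) : IsLine (exceptional j) := by
  rw [IsLine, ip8_exceptional, ip8_comm, ip8_exceptional]
  simp [exceptional, Kdp, Fin.succ_ne_zero]

lemma isLine_lineThrough {j k : Fin 7} (hjk : j ≠ k) : IsLine (lineThrough j k) := by
  rw [IsLine, ip8_lineThrough, ip8_comm, ip8_lineThrough]
  simp [lineThrough, exceptional, Kdp, Fin.succ_ne_zero, hjk, hjk.symm]

section Reflection

variable {D : Fin 8 → ℤ}

def reflect (D x : Fin 8 → ℤ) : Fin 8 → ℤ := x + ip8 x D • D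

lemma ip8_reflect_reflect (hDD : ip8 D D = -2) (x y : Fin 8 → ℤ) :
    ip8 (reflect D x) (reflect D y) = ip8 x y := by
  simp only [reflect, ip8_add_left, ip8_add_right, ip8_smul_left, ip8_smul_right, hDD,
    ip8_comm D y]
  ring

lemma reflect_Kdp (hDK : ip8 D Kdp = 0) : reflect D Kdp = Kdp := by
  simp [reflect, ip8_comm Kdp, hDK]

lemma ip8_reflect_right (hDD : ip8 D D = -2) (x : Fin 8 → ℤ) :
    ip8 D (reflect D x) = -ip8 D x := by
  simp only [reflect, ip8_add_right, ip8_smul_right, hDD, ip8_comm x D]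
  ring

lemma IsLine.reflect {L : Fin 8 → ℤ} (hL : IsLine L) (hDK : ip8 D Kdp = 0)
    (hDD : ip8 D D = -2) : IsLine (reflect D L) := by
  rw [IsLine, ip8_reflect_reflect hDD, ← reflect_Kdp hDK, ip8_reflect_reflect hDD]
  exact hL

end Reflection

section Combinatorics

variable {ι : Type*} [Fintype ι] {m : ι → ℤ}

lemma exists_eq_neg_one_of_sum_eq_zero (hsum : ∑ i, m i = 0) (hsq : ∑ i, m i ^ 2 = 2) :
    ∃ j, m j = -1 := by
  obtain ⟨j, hj⟩ : ∃ j, m j < 0 := by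
    by_contra! hnonneg
    have hzero := (sum_eq_zero_iff_of_nonneg fun i _ => hnonneg i).mp hsum
    simp [hzero] at hsq
  have hle : m j ^ 2 ≤ 2 := hsq ▸ single_le_sum (fun i _ => sq_nonneg (m i)) (mem_univ j)
  exact ⟨j, by nlinarith⟩

lemma eq_zero_or_eq_neg_one_of_sum_mul_add_one_eq_zero (h : ∑ i, m i * (m i + 1) = 0) (i : ι) :
    m i = 0 ∨ m i = -1 := by
  have hnonneg (i : ι) : 0 ≤ m i * (m i + 1) := by nlinarith [sq_nonneg (2 * m i + 1)]
  have hi := (sum_eq_zero_iff_of_nonneg fun i _ => hnonneg i).mp h i (mem_univ i)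
  rcases mul_eq_zero.mp hi with h0 | h1
  · exact Or.inl h0
  · exact Or.inr (by omega)

lemma card_filter_eq_zero_eq_sum (hm : ∀ i, m i = 0 ∨ m i = -1) :
    (#{i | m i = 0} : ℤ) = ∑ i, (m i + 1) := by
  rw [← sum_boole]
  refine sum_congr rfl fun i _ => ?_
  rcases hm i with h | h <;> simp [h]

lemma card_filter_eq_neg_one_eq_neg_sum (hm : ∀ i, m i = 0 ∨ m i = -1) :
    (#{i | m i = -1} : ℤ) = -∑ i, m i := by
  rw [← sum_neg_distrib, ← sum_boole]
  refine sum_congr rfl fun i _ => ?_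
  rcases hm i with h | h <;> simp [h]

end Combinatorics

lemma exists_isLine_ip8_eq_one_of_nonneg {D : Fin 8 → ℤ} (hD0 : 0 ≤ D 0)
    (hDK : ip8 D Kdp = 0) (hDD : ip8 D D = -2) : ∃ L, IsLine L ∧ ip8 D L = 1 := by
  set m : Fin 7 → ℤ := fun i => D i.succ
  have hsum : ∑ i, m i = -3 * D 0 := by rw [ip8_Kdp] at hDK; linarith
  have hsq : ∑ i, m i ^ 2 = D 0 ^ 2 + 2 := by rw [ip8_self] at hDD; linarith
  have hle : D 0 ≤ 2 := by
    have := sq_sum_le_card_mul_sum_sq (s := univ) (f := m)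
    simp only [card_univ, Fintype.card_fin, Nat.cast_ofNat, hsum, hsq] at this
    nlinarith
  obtain hd | hd | hd : D 0 = 0 ∨ D 0 = 1 ∨ D 0 = 2 := by omega
  · obtain ⟨j, hj⟩ := exists_eq_neg_one_of_sum_eq_zero (by simpa [hd] using hsum)
      (by simpa [hd] using hsq)
    refine ⟨exceptional j, isLine_exceptional j, ?_⟩
    rw [ip8_exceptional, show D j.succ = -1 from hj, neg_neg]
  -- for `D 0 ∈ {1, 2}`, `∑ mᵢ (mᵢ + 1) = (D 0 - 1) (D 0 - 2)` vanishes
  all_goals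
    have h01 := eq_zero_or_eq_neg_one_of_sum_mul_add_one_eq_zero (m := m) <| by
      simp only [mul_add, mul_one, ← sq, sum_add_distrib, hsum, hsq, hd]
      norm_num
    have hzero := card_filter_eq_zero_eq_sum h01
    have hneg := card_filter_eq_neg_one_eq_neg_sum h01
    simp only [sum_add_distrib, hsum, hd, sum_const, card_univ, Fintype.card_fin,
      nsmul_eq_mul, Nat.cast_ofNat, mul_one] at hzero hneg
  · obtain ⟨j, hj, k, hk, hjk⟩ := one_lt_card.mp (show 1 < #{i | m i = 0} by omega)
    simp only [mem_filter, mem_univ, true_and] at hj hk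
    refine ⟨lineThrough j k, isLine_lineThrough hjk, ?_⟩
    rw [ip8_lineThrough]; change D 0 + m j + m k = 1; omega
  · obtain ⟨j, hj⟩ := card_pos.mp (show 0 < #{i | m i = -1} by omega)
    obtain ⟨k, hk⟩ := card_pos.mp (show 0 < #{i | m i = 0} by omega)
    simp only [mem_filter, mem_univ, true_and] at hj hk
    have hjk : j ≠ k := by rintro rfl; omega
    refine ⟨lineThrough j k, isLine_lineThrough hjk, ?_⟩
    rw [ip8_lineThrough]; change D 0 + m j + m k = 1; omega

lemma exists_isLine_ip8_eq_one {D : Fin 8 → ℤ} (hDK : ip8 D Kdp = 0) (hDD : ip8 D D = -2) :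
    ∃ L, IsLine L ∧ ip8 D L = 1 := by
  rcases le_or_gt 0 (D 0) with hD0 | hD0
  · exact exists_isLine_ip8_eq_one_of_nonneg hD0 hDK hDD
  · obtain ⟨L, hL, hDL⟩ := exists_isLine_ip8_eq_one_of_nonneg (D := -D) (by simp; omega)
      (by rw [ip8_neg_left, hDK, neg_zero])
      (by rw [ip8_neg_left, ip8_comm, ip8_neg_left, hDD, neg_neg])
    refine ⟨reflect D L, hL.reflect hDK hDD, ?_⟩
    rw [ip8_reflect_right hDD, ← hDL, ip8_neg_left]

/-- Every root of a degree-2 del Pezzo surface is a difference of two disjoint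
lines. -/
theorem root_is_difference_of_disjoint_lines
    (D : Fin 8 → ℤ) (hDK : ip8 D Kdp = 0) (hDD : ip8 D D = -2) :
    ∃ L₁ L₂ : Fin 8 → ℤ,
      ip8 L₁ L₁ = -1 ∧ ip8 L₁ Kdp = -1 ∧
      ip8 L₂ L₂ = -1 ∧ ip8 L₂ Kdp = -1 ∧
      ip8 L₁ L₂ = 0 ∧ D = L₁ - L₂ := by
  obtain ⟨L, hL, hDL⟩ := exists_isLine_ip8_eq_one hDK hDD
  obtain ⟨hL₁L₁, hL₁K⟩ := hL.reflect hDK hDD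
  have hreflect : reflect D L = L + D := by rw [reflect, ip8_comm, hDL, one_smul]
  refine ⟨reflect D L, L, hL₁L₁, hL₁K, hL.1, hL.2, ?_, by rw [hreflect]; abel⟩
  rw [hreflect, ip8_add_left, hL.1, hDL, neg_add_cancel]
end

section
/- Let 𝒟 be a triangulated category with Serre functor S(E) = τE[2] where τ is an involutive autoequivalence, and let 𝒜 ⊂ 𝒟 be the heart of a bounded t-structure with τ(𝒜) = 𝒜. Then for all E, F ∈ 𝒜 and all i ∉ {0,1,2}, Hom(E, F[i]) = 0. -/
lemma Int.lt_zero_or_two_sub_lt_zero {i : ℤ} (hi : i ∉ ({0, 1, 2} : Set ℤ)) :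
    i < 0 ∨ 2 - i < 0 := by
  simp only [Set.mem_insert_iff, Set.mem_singleton_iff, not_or] at hi
  omega

theorem tau_invariant_heart_homological_dimension_two_general
    {Obj : Type} (A : Set Obj) (τ : Obj → Obj) (hom : Obj → Obj → ℤ → ℕ)
    (hτA : ∀ E ∈ A, τ E ∈ A)
    (hheart : ∀ E ∈ A, ∀ F ∈ A, ∀ i : ℤ, i < 0 → hom E F i = 0)
    (hSerre : ∀ E F : Obj, ∀ i : ℤ, hom E F i = hom F (τ E) (2 - i)) :
    ∀ E ∈ A, ∀ F ∈ A, ∀ i : ℤ, i ∉ ({0, 1, 2} : Set ℤ) → hom E F i = 0 := by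
  intro E hE F hF i hi
  rcases Int.lt_zero_or_two_sub_lt_zero hi with hneg | hdual_neg
  · exact hheart E hE F hF i hneg
  · rw [hSerre E F i]
    exact hheart F hF (τ E) (hτA E hE) (2 - i) hdual_neg

/-- A τ-invariant heart 𝒜 in a triangulated category with Serre functor
S = τ ∘ [2] (τ an involution) has homological dimension 2: for E, F ∈ 𝒜,
Hom(E, F[i]) = 0 unless i ∈ {0,1,2}. Here `hom E F i` denotes the dimension of
Hom(E, F[i]); the heart property gives vanishing for i < 0, and Serre duality
gives hom E F i = hom F (τ E) (2 - i). -/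
theorem tau_invariant_heart_homological_dimension_two
    {Obj : Type} (A : Set Obj) (τ : Obj → Obj) (hom : Obj → Obj → ℤ → ℕ)
    (hinv : ∀ E, τ (τ E) = E)
    (hτA : ∀ E ∈ A, τ E ∈ A)
    (hheart : ∀ E ∈ A, ∀ F ∈ A, ∀ i : ℤ, i < 0 → hom E F i = 0)
    (hSerre : ∀ E F : Obj, ∀ i : ℤ, hom E F i = hom F (τ E) (2 - i)) :
    ∀ E ∈ A, ∀ F ∈ A, ∀ i : ℤ, i ∉ ({0, 1, 2} : Set ℤ) → hom E F i = 0 :=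
  tau_invariant_heart_homological_dimension_two_general A τ hom hτA hheart hSerre
end
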